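/- Let F be a field with char F ≠ 2, and consider O(2m+1, F) with respect to a nondegenerate symmetric bilinear form that is block diagonal with a 2-dimensional block and a (2m-1)-dimensional block. The centralizer in O(2m+1, F) of a = diag(-I₂, I_{2m-1}) is isomorphic to O(2, F) × O(2m-1, F), where each factor is the orthogonal group of the restricted form. Consequently, if O(2m+1, F) is acceptable then O(2m-1, F) is acceptable. -/

import Mathlib

/-- A group `G` is *acceptable* if for every finite group `H`, any two element-conjugate
homomorphisms `H → G` are globally conjugate. -/
def IsAcceptable (G : Type*) [Group G] : Prop :=
  ∀ (H : Type) (_ : Group H) (_ : Finite H) (φ₁ φ₂ : H →* G),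
    (∀ h : H, ∃ g : G, g * φ₁ h * g⁻¹ = φ₂ h) →
    ∃ g : G, ∀ h : H, g * φ₁ h * g⁻¹ = φ₂ h


open Matrix

/-- The subgroup of `GL n F` preserving the bilinear form with Gram matrix `J`,
i.e. matrices `A` with `ᵗA J A = J`. -/
def formGroup {n : Type*} [Fintype n] [DecidableEq n] {F : Type*} [Field F]
    (J : Matrix n n F) : Subgroup (GL n F) where
  carrier := {A | (A : Matrix n n F)ᵀ * J * (A : Matrix n n F) = J}
  one_mem' := by simp
  mul_mem' := by
    intro A B hA hB
    simp only [Set.mem_setOf_eq] at *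
    have hc : ((A * B : GL n F) : Matrix n n F) = (A : Matrix n n F) * B := rfl
    rw [hc, transpose_mul]
    calc (B : Matrix n n F)ᵀ * (A : Matrix n n F)ᵀ * J * ((A : Matrix n n F) * B)
        = (B : Matrix n n F)ᵀ * ((A : Matrix n n F)ᵀ * J * A) * B := by
          simp only [Matrix.mul_assoc]
      _ = J := by rw [hA]; exact hB
  inv_mem' := by
    intro A hA
    simp only [Set.mem_setOf_eq] at *
    have h1 : ((A : GL n F) : Matrix n n F) * ((A⁻¹ : GL n F) : Matrix n n F) = 1 :=
      A.mul_inv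
    calc ((A⁻¹ : GL n F) : Matrix n n F)ᵀ * J * ((A⁻¹ : GL n F) : Matrix n n F)
        = ((A⁻¹ : GL n F) : Matrix n n F)ᵀ * ((A : Matrix n n F)ᵀ * J * A) *
            ((A⁻¹ : GL n F) : Matrix n n F) := by rw [hA]
      _ = (((A : GL n F) : Matrix n n F) * ((A⁻¹ : GL n F) : Matrix n n F))ᵀ *
            (J * (((A : GL n F) : Matrix n n F) * ((A⁻¹ : GL n F) : Matrix n n F))) := by
          rw [transpose_mul]; simp only [Matrix.mul_assoc]
      _ = J := by rw [h1]; simp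

/-! A matrix commuting with `diag(-1, 1)` has off-diagonal blocks equal to their own negatives,
hence zero when `2 ≠ 0`, so the centralizer of `a = diag(-1, 1)` in `O(J₂ ⊕ J')` consists of the
block-diagonal isometries, i.e. it is `O(J₂) × O(J')`. Since `a` has finite order, acceptability
of `O(J₂ ⊕ J')` passes to this centralizer and then to its factor `O(J')`. -/

namespace IsAcceptable

theorem of_mulEquiv {G G' : Type*} [Group G] [Group G'] (e : G ≃* G') (hG : IsAcceptable G) :
    IsAcceptable G' := by
  intro H _ _ φ₁ φ₂ hconj
  obtain ⟨g, hg⟩ := hG H _ ‹_› (e.symm.toMonoidHom.comp φ₁) (e.symm.toMonoidHom.comp φ₂)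
    fun h => (hconj h).imp' e.symm fun g hg => by simpa using congrArg e.symm hg
  exact ⟨e g, fun h => by simpa using congrArg e (hg h)⟩

theorem of_prod_right {G G' : Type*} [Group G] [Group G'] (hG : IsAcceptable (G × G')) :
    IsAcceptable G' := by
  intro H _ _ φ₁ φ₂ hconj
  obtain ⟨g, hg⟩ := hG H _ ‹_› ((1 : H →* G).prod φ₁) ((1 : H →* G).prod φ₂)
    fun h => (hconj h).imp' (1, ·) fun g hg => by simp [hg]
  exact ⟨g.2, fun h => by simpa using congrArg Prod.snd (hg h)⟩

/-- Element-conjugate `φ₁ φ₂ : H → C_G(K)` extend to element-conjugate maps `H × K → G`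
(acting by the inclusion on `K`); a conjugator of the extensions centralizes `K`. -/
theorem centralizer {G : Type} [Group G] (hG : IsAcceptable G) (K : Subgroup G) [Finite K] :
    IsAcceptable (Subgroup.centralizer (K : Set G)) := by
  intro H _ _ φ₁ φ₂ hconj
  have hcomm (c : Subgroup.centralizer (K : Set G)) (k : K) : Commute (c : G) k :=
    (Subgroup.mem_centralizer_iff.mp c.2 k k.2).symm
  let ψ (φ : H →* Subgroup.centralizer (K : Set G)) : H × K →* G :=
    ((Subgroup.centralizer (K : Set G)).subtype.comp φ).noncommCoprod K.subtype
      fun h k => hcomm (φ h) k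
  have hψ (φ : H →* Subgroup.centralizer (K : Set G)) (h : H) (k : K) :
      ψ φ (h, k) = φ h * k := rfl
  obtain ⟨g, hg⟩ := hG (H × K) _ inferInstance (ψ φ₁) (ψ φ₂) fun ⟨h, k⟩ => by
    obtain ⟨c, hc⟩ := hconj h
    refine ⟨c, ?_⟩
    rw [hψ, hψ, ← hc, ← mul_assoc, mul_assoc _ _ (c : G)⁻¹, ← (hcomm c k).inv_left.eq]
    simp only [Subgroup.coe_mul, Subgroup.coe_inv, mul_assoc]
  have hgK : g ∈ Subgroup.centralizer (K : Set G) := by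
    rw [Subgroup.mem_centralizer_iff]
    intro k hk
    simpa [hψ] using eq_mul_inv_iff_mul_eq.mp (hg (1, ⟨k, hk⟩)).symm
  refine ⟨⟨g, hgK⟩, fun h => Subtype.ext ?_⟩
  simpa [hψ] using hg (h, 1)

theorem centralizer_singleton {G : Type} [Group G] (hG : IsAcceptable G) {a : G}
    (ha : IsOfFinOrder a) : IsAcceptable (Subgroup.centralizer {a}) := by
  have : Finite (Subgroup.zpowers a) := ha.finite_zpowers.to_subtype
  rw [← Subgroup.centralizer_closure, ← Subgroup.zpowers_eq_closure]
  exact hG.centralizer _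

end IsAcceptable

theorem neg_eq_self_iff_of_two_ne_zero {R M : Type*} [DivisionRing R] [AddCommGroup M]
    [Module R M] (h2 : (2 : R) ≠ 0) {x : M} : -x = x ↔ x = 0 := by
  refine ⟨fun h => ?_, fun h => by simp [h]⟩
  have : (2 : R) • x = 0 := by rw [two_smul, ← neg_add_cancel x, h]
  exact (smul_eq_zero.mp this).resolve_left h2

namespace Matrix

variable {R : Type*} {κ ι : Type*} [Fintype κ] [DecidableEq κ] [Fintype ι] [DecidableEq ι]

def fromBlocksDiagHom [Semiring R] :
    Matrix κ κ R × Matrix ι ι R →* Matrix (κ ⊕ ι) (κ ⊕ ι) R where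
  toFun p := fromBlocks p.1 0 0 p.2
  map_one' := fromBlocks_one
  map_mul' p q := by simp [fromBlocks_multiply]

omit [Fintype κ] [DecidableEq κ] [Fintype ι] [DecidableEq ι] in
theorem fromBlocks_eq_fromBlocks_zero_zero_iff [Zero R] (X : Matrix (κ ⊕ ι) (κ ⊕ ι) R) :
    (∃ A D, X = fromBlocks A 0 0 D) ↔ X.toBlocks₁₂ = 0 ∧ X.toBlocks₂₁ = 0 := by
  constructor
  · rintro ⟨A, D, rfl⟩
    exact ⟨rfl, rfl⟩
  · rintro ⟨h₁₂, h₂₁⟩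
    exact ⟨_, _, by rw [← h₁₂, ← h₂₁, fromBlocks_toBlocks]⟩

theorem commute_fromBlocks_neg_one_one_iff [DivisionRing R] (h2 : (2 : R) ≠ 0)
    (X : Matrix (κ ⊕ ι) (κ ⊕ ι) R) :
    Commute (fromBlocks (-1) 0 0 1) X ↔ X.toBlocks₁₂ = 0 ∧ X.toBlocks₂₁ = 0 := by
  conv_lhs => rw [← fromBlocks_toBlocks X, Commute, SemiconjBy, fromBlocks_multiply,
    fromBlocks_multiply]
  simp only [Matrix.one_mul, Matrix.mul_one, Matrix.neg_mul, Matrix.mul_neg, Matrix.zero_mul,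
    Matrix.mul_zero, add_zero, zero_add, fromBlocks_inj, true_and, and_true]
  rw [neg_eq_self_iff_of_two_ne_zero h2, eq_comm (b := -_), neg_eq_self_iff_of_two_ne_zero h2]

namespace GeneralLinearGroup

def fromBlocksDiag [CommRing R] : GL κ R × GL ι R →* GL (κ ⊕ ι) R :=
  (Units.map fromBlocksDiagHom).comp MulEquiv.prodUnits.symm.toMonoidHom

@[simp] theorem coe_fromBlocksDiag [CommRing R] (p : GL κ R × GL ι R) :
    (fromBlocksDiag p : Matrix (κ ⊕ ι) (κ ⊕ ι) R) = fromBlocks p.1 0 0 p.2 := rfl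

theorem fromBlocksDiag_injective [CommRing R] :
    Function.Injective (fromBlocksDiag : GL κ R × GL ι R →* GL (κ ⊕ ι) R) := by
  intro p q h
  have := congrArg Units.val h
  simp only [coe_fromBlocksDiag, fromBlocks_inj] at this
  exact Prod.ext (Units.ext this.1) (Units.ext this.2.2.2)

theorem mem_range_fromBlocksDiag_iff [CommRing R] (X : GL (κ ⊕ ι) R) :
    X ∈ (fromBlocksDiag : GL κ R × GL ι R →* GL (κ ⊕ ι) R).range ↔
      (X : Matrix (κ ⊕ ι) (κ ⊕ ι) R).toBlocks₁₂ = 0 ∧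
      (X : Matrix (κ ⊕ ι) (κ ⊕ ι) R).toBlocks₂₁ = 0 := by
  rw [← fromBlocks_eq_fromBlocks_zero_zero_iff]
  constructor
  · rintro ⟨p, rfl⟩
    exact ⟨_, _, rfl⟩
  · rintro ⟨A, D, hX⟩
    have hdet : IsUnit (A.det * D.det) := by
      rw [← det_fromBlocks_zero₂₁, ← hX]
      exact (isUnit_iff_isUnit_det _).mp X.isUnit
    refine ⟨(((isUnit_iff_isUnit_det A).mpr (isUnit_of_mul_isUnit_left hdet)).unit,
      ((isUnit_iff_isUnit_det D).mpr (isUnit_of_mul_isUnit_right hdet)).unit), ?_⟩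
    ext : 1
    exact hX.symm

end GeneralLinearGroup

end Matrix

namespace Subgroup

variable {G H : Type*} [Group G] [Group H]

theorem mem_centralizer_singleton_iff_coe {K : Subgroup G} {a x : K} :
    x ∈ centralizer {a} ↔ (x : G) ∈ centralizer {(a : G)} := by
  simp only [mem_centralizer_singleton_iff, Subtype.ext_iff, coe_mul]

noncomputable def centralizerEquivComap {K : Subgroup G} (a : K) {f : H →* G}
    (hf : Function.Injective f) (hrange : f.range = centralizer {(a : G)}) :
    centralizer ({a} : Set K) ≃* K.comap f :=
  MulEquiv.symm <| MulEquiv.ofBijective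
    ({ toFun x := ⟨⟨f x, x.2⟩, mem_centralizer_singleton_iff_coe.mpr (hrange ▸ ⟨x, rfl⟩)⟩
       map_one' := by ext; simp
       map_mul' x y := by ext; simp } : K.comap f →* centralizer ({a} : Set K))
    ⟨fun x y hxy =>
      Subtype.ext (hf (congrArg (fun z : centralizer ({a} : Set K) => (z : G)) hxy)),
     fun c => by
      obtain ⟨y, hy⟩ : (c : G) ∈ f.range :=
        hrange ▸ mem_centralizer_singleton_iff_coe.mp c.2
      exact ⟨⟨y, show f y ∈ K from hy ▸ (c : K).2⟩, by ext; exact hy⟩⟩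

end Subgroup

section formGroup

variable {F : Type*} [Field F] {κ ι : Type*} [Fintype κ] [DecidableEq κ] [Fintype ι]
  [DecidableEq ι]

theorem mem_formGroup_iff {J : Matrix κ κ F} {A : GL κ F} :
    A ∈ formGroup J ↔ (A : Matrix κ κ F)ᵀ * J * A = J :=
  Iff.rfl

theorem neg_one_mem_formGroup (J : Matrix κ κ F) : -1 ∈ formGroup J := by
  simp [mem_formGroup_iff]

theorem comap_fromBlocksDiag_formGroup (J₁ : Matrix κ κ F) (J₂ : Matrix ι ι F) :
    (formGroup (fromBlocks J₁ 0 0 J₂)).comap GeneralLinearGroup.fromBlocksDiag =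
      (formGroup J₁).prod (formGroup J₂) := by
  ext p
  simp [Subgroup.mem_prod, mem_formGroup_iff, fromBlocks_transpose, fromBlocks_multiply]

theorem range_fromBlocksDiag_eq_centralizer (h2 : (2 : F) ≠ 0) (a : GL (κ ⊕ ι) F)
    (ha : (a : Matrix (κ ⊕ ι) (κ ⊕ ι) F) = fromBlocks (-1) 0 0 1) :
    (GeneralLinearGroup.fromBlocksDiag : GL κ F × GL ι F →* GL (κ ⊕ ι) F).range =
      Subgroup.centralizer {a} := by
  ext X
  rw [GeneralLinearGroup.mem_range_fromBlocksDiag_iff, Subgroup.mem_centralizer_singleton_iff,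
    ← commute_fromBlocks_neg_one_one_iff h2, ← ha, Units.ext_iff, eq_comm]
  rfl

theorem nonempty_centralizer_mulEquiv_prod (h2 : (2 : F) ≠ 0) (J₁ : Matrix κ κ F)
    (J₂ : Matrix ι ι F) (a : formGroup (fromBlocks J₁ 0 0 J₂))
    (ha : ((a : GL (κ ⊕ ι) F) : Matrix (κ ⊕ ι) (κ ⊕ ι) F) = fromBlocks (-1) 0 0 1) :
    Nonempty (Subgroup.centralizer {a} ≃* formGroup J₁ × formGroup J₂) :=
  ⟨(Subgroup.centralizerEquivComap a GeneralLinearGroup.fromBlocksDiag_injective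
      (range_fromBlocksDiag_eq_centralizer h2 _ ha)).trans <|
    (MulEquiv.subgroupCongr (comap_fromBlocksDiag_formGroup J₁ J₂)).trans
      (Subgroup.prodEquiv _ _)⟩

end formGroup

theorem O_odd_acceptable_descends_general (F : Type) [Field F] (hchar : (2 : F) ≠ 0)
    (m : ℕ)
    (J₂ : Matrix (Fin 2) (Fin 2) F)
    (J' : Matrix (Fin (2 * m - 1)) (Fin (2 * m - 1)) F) :
    (∀ a : formGroup (Matrix.fromBlocks J₂ 0 0 J' :
        Matrix (Fin 2 ⊕ Fin (2 * m - 1)) (Fin 2 ⊕ Fin (2 * m - 1)) F),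
      ((a : GL (Fin 2 ⊕ Fin (2 * m - 1)) F) :
          Matrix (Fin 2 ⊕ Fin (2 * m - 1)) (Fin 2 ⊕ Fin (2 * m - 1)) F) =
        Matrix.fromBlocks (-1) 0 0 1 →
      Nonempty ((Subgroup.centralizer
          ({a} : Set (formGroup (Matrix.fromBlocks J₂ 0 0 J' :
            Matrix (Fin 2 ⊕ Fin (2 * m - 1)) (Fin 2 ⊕ Fin (2 * m - 1)) F))))
        ≃* formGroup J₂ × formGroup J')) ∧
    (IsAcceptable (formGroup (Matrix.fromBlocks J₂ 0 0 J' :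
        Matrix (Fin 2 ⊕ Fin (2 * m - 1)) (Fin 2 ⊕ Fin (2 * m - 1)) F)) →
      IsAcceptable (formGroup J')) := by
  refine ⟨nonempty_centralizer_mulEquiv_prod hchar J₂ J', fun hacc => ?_⟩
  have hmem : ((-1, 1) : GL (Fin 2) F × GL (Fin (2 * m - 1)) F) ∈
      (formGroup J₂).prod (formGroup J') :=
    ⟨neg_one_mem_formGroup J₂, one_mem _⟩
  let a : formGroup (fromBlocks J₂ 0 0 J') :=
    ⟨GeneralLinearGroup.fromBlocksDiag (-1, 1), by
      rwa [← Subgroup.mem_comap, comap_fromBlocksDiag_formGroup]⟩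
  have ha : IsOfFinOrder a := isOfFinOrder_iff_pow_eq_one.mpr ⟨2, two_pos, Subtype.ext <| by
    simp [a, ← map_pow, Prod.mk_one_one]⟩
  obtain ⟨e⟩ := nonempty_centralizer_mulEquiv_prod hchar J₂ J' a rfl
  exact ((hacc.centralizer_singleton ha).of_mulEquiv e).of_prod_right

theorem O_odd_acceptable_descends (F : Type) [Field F] (hchar : (2 : F) ≠ 0)
    (m : ℕ) (hm : 1 ≤ m)
    (J₂ : Matrix (Fin 2) (Fin 2) F) (hJ₂ : J₂ᵀ = J₂) (hJ₂' : IsUnit J₂)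
    (J' : Matrix (Fin (2 * m - 1)) (Fin (2 * m - 1)) F) (hJ' : J'ᵀ = J') (hJ'' : IsUnit J') :
    (∀ a : formGroup (Matrix.fromBlocks J₂ 0 0 J' :
        Matrix (Fin 2 ⊕ Fin (2 * m - 1)) (Fin 2 ⊕ Fin (2 * m - 1)) F),
      ((a : GL (Fin 2 ⊕ Fin (2 * m - 1)) F) :
          Matrix (Fin 2 ⊕ Fin (2 * m - 1)) (Fin 2 ⊕ Fin (2 * m - 1)) F) =
        Matrix.fromBlocks (-1) 0 0 1 →
      Nonempty ((Subgroup.centralizer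
          ({a} : Set (formGroup (Matrix.fromBlocks J₂ 0 0 J' :
            Matrix (Fin 2 ⊕ Fin (2 * m - 1)) (Fin 2 ⊕ Fin (2 * m - 1)) F))))
        ≃* formGroup J₂ × formGroup J')) ∧
    (IsAcceptable (formGroup (Matrix.fromBlocks J₂ 0 0 J' :
        Matrix (Fin 2 ⊕ Fin (2 * m - 1)) (Fin 2 ⊕ Fin (2 * m - 1)) F)) →
      IsAcceptable (formGroup J')) :=
  O_odd_acceptable_descends_general F hchar m J₂ J'
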